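/- arXiv:2301.04478 — 4 statements merged into one kernel-verified Lean document; each statement's English description precedes it below -/
import Mathlib

section
/- If the circle family C_{(γ,λ)} is creative, i.e. there exists a smooth map ν̃: I → S¹ with λ'(t) = -β(t)(ν̃(t)·μ(t)) for all t, then the map f: I → ℝ² defined by f(t) = γ(t) + λ(t)ν̃(t) is an envelope of the circle family: f(t) lies on the circle of center γ(t) and radius λ(t), and f'(t)·(f(t)-γ(t)) = 0 for all t. -/
noncomputable section

/-- The Euclidean plane. -/
abbrev Plane := EuclideanSpace ℝ (Fin 2)

/-- The standard scalar (dot) product on the plane. -/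
def dotp (x y : Plane) : ℝ := inner ℝ x y

/-- The vector with coordinates `a`, `b`. -/
def vec2 (a b : ℝ) : Plane := (WithLp.equiv 2 (Fin 2 → ℝ)).symm ![a, b]

/-- Anti-clockwise rotation by π/2. -/
def rotJ (v : Plane) : Plane := vec2 (-(v 1)) (v 0)

/-- `f` is an envelope of the circle family with center curve `γ` and radius
function `r`, on the parameter set `I`. -/
def IsEnvelope (I : Set ℝ) (γ : ℝ → Plane) (r : ℝ → ℝ) (f : ℝ → Plane) : Prop :=
  ContDiffOn ℝ (⊤ : ℕ∞) f I ∧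
    ∀ t ∈ I, ‖f t - γ t‖ = r t ∧ dotp (deriv f t) (f t - γ t) = 0

lemma dotp_expand (x y : Plane) : dotp x y = x 0 * y 0 + x 1 * y 1 := by
  simp [dotp, PiLp.inner_apply, Fin.sum_univ_two, RCLike.inner_apply]; ring

lemma rotJ0 (v : Plane) : rotJ v 0 = -(v 1) := by simp [rotJ, vec2]
lemma rotJ1 (v : Plane) : rotJ v 1 = v 0 := by simp [rotJ, vec2]

lemma unit_dotp (x : Plane) (h : ‖x‖ = 1) : dotp x x = 1 := by
  show (inner ℝ x x : ℝ) = 1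
  rw [real_inner_self_eq_norm_sq, h]; norm_num

/-- Decomposition identity in an orthonormal frame `(ν, Jν)`. -/
lemma frame_identity (w u ν : Plane) (hν : dotp ν ν = 1) :
    dotp w u = dotp w ν * dotp u ν + dotp w (rotJ ν) * dotp u (rotJ ν) := by
  simp only [dotp_expand, rotJ0, rotJ1] at *
  linear_combination (-(w 0 * u 0) - w 1 * u 1) * hν

theorem creative_gives_envelope (I : Set ℝ) (hIopen : IsOpen I) (hIconn : I.OrdConnected)
    (γ ν : ℝ → Plane) (r : ℝ → ℝ)
    (hγ : ContDiffOn ℝ (⊤ : ℕ∞) γ I) (hν : ContDiffOn ℝ (⊤ : ℕ∞) ν I)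
    (hνunit : ∀ t ∈ I, ‖ν t‖ = 1)
    (hfrontal : ∀ t ∈ I, dotp (deriv γ t) (ν t) = 0)
    (hr : ContDiffOn ℝ (⊤ : ℕ∞) r I) (hrpos : ∀ t ∈ I, 0 < r t)
    (ντ : ℝ → Plane) (hcrs : ContDiffOn ℝ (⊤ : ℕ∞) ντ I) (hcru : ∀ t ∈ I, ‖ντ t‖ = 1)
    (hcr : ∀ t ∈ I,
      deriv r t = -(dotp (deriv γ t) (rotJ (ν t))) * dotp (ντ t) (rotJ (ν t))) :
    ∀ t ∈ I,
      dotp ((γ t + r t • ντ t) - γ t) ((γ t + r t • ντ t) - γ t) = (r t) ^ 2 ∧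
      dotp (deriv (fun s => γ s + r s • ντ s) t) ((γ t + r t • ντ t) - γ t) = 0 := by
  intro t ht
  have hmem : I ∈ nhds t := hIopen.mem_nhds ht
  have hγd : DifferentiableAt ℝ γ t :=
    (hγ.differentiableOn (by norm_num)).differentiableAt hmem
  have hrd : DifferentiableAt ℝ r t :=
    (hr.differentiableOn (by norm_num)).differentiableAt hmem
  have hτd : DifferentiableAt ℝ ντ t :=
    (hcrs.differentiableOn (by norm_num)).differentiableAt hmem
  have hντ1 : dotp (ντ t) (ντ t) = 1 := unit_dotp _ (hcru t ht)
  have hν1 : dotp (ν t) (ν t) = 1 := unit_dotp _ (hνunit t ht)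
  -- derivative of f
  have hf : HasDerivAt (fun s => γ s + r s • ντ s)
      (deriv γ t + (r t • deriv ντ t + deriv r t • ντ t)) t :=
    (hγd.hasDerivAt).add ((hrd.hasDerivAt).smul (hτd.hasDerivAt))
  -- ⟨ντ', ντ⟩ = 0
  have hperp : dotp (deriv ντ t) (ντ t) = 0 := by
    have hg : HasDerivAt (fun s => (inner ℝ (ντ s) (ντ s) : ℝ))
        (inner ℝ (ντ t) (deriv ντ t) + inner ℝ (deriv ντ t) (ντ t)) t :=
      (hτd.hasDerivAt).inner ℝ (hτd.hasDerivAt)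
    have heq : (fun s => (inner ℝ (ντ s) (ντ s) : ℝ)) =ᶠ[nhds t] fun _ => 1 := by
      filter_upwards [hmem] with s hs
      exact unit_dotp _ (hcru s hs)
    have hg' : HasDerivAt (fun _ : ℝ => (1 : ℝ))
        (inner ℝ (ντ t) (deriv ντ t) + inner ℝ (deriv ντ t) (ντ t)) t :=
      hg.congr_of_eventuallyEq heq.symm
    have h0 := hg'.deriv
    rw [deriv_const] at h0
    have hsymm : (inner ℝ (ντ t) (deriv ντ t) : ℝ) = inner ℝ (deriv ντ t) (ντ t) :=
      real_inner_comm _ _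
    rw [hsymm] at h0
    show (inner ℝ (deriv ντ t) (ντ t) : ℝ) = 0
    linarith
  -- ⟨γ', ντ⟩ = -r'
  have hkey : dotp (deriv γ t) (ντ t) = -(deriv r t) := by
    rw [frame_identity (deriv γ t) (ντ t) (ν t) hν1, hfrontal t ht, hcr t ht]
    ring
  constructor
  · simp only [add_sub_cancel_left]
    rw [show dotp (r t • ντ t) (r t • ντ t) = r t * r t * dotp (ντ t) (ντ t) by
      simp only [dotp, real_inner_smul_left, real_inner_smul_right]; ring]
    rw [hντ1]; ring
  · rw [hf.deriv]
    simp only [add_sub_cancel_left]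
    have expand : dotp (deriv γ t + (r t • deriv ντ t + deriv r t • ντ t)) (r t • ντ t)
        = r t * (dotp (deriv γ t) (ντ t) + deriv r t * dotp (ντ t) (ντ t)
            + r t * dotp (deriv ντ t) (ντ t)) := by
      simp [dotp, inner_add_left, real_inner_smul_left, real_inner_smul_right]
      ring
    rw [expand, hkey, hντ1, hperp]
    ring
end
end

section
/- If f: I → ℝ² is an envelope of the circle family C_{(γ,λ)}, then the family is creative: defining ν̃(t) = (f(t)-γ(t))/λ(t), the map ν̃ takes values in S¹ and satisfies λ'(t) = -β(t)(ν̃(t)·μ(t)) for all t ∈ I. -/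
noncomputable section

private lemma alg_key (a b w0 w1 x0 x1 : ℝ) (h1 : a*a + b*b = 1) (h2 : w0*a + w1*b = 0) :
    w0*x0 + w1*x1 = (w0*(-b) + w1*a) * (x0*(-b) + x1*a) := by
  linear_combination (a*x0 + b*x1) * h2 - (w0*x0 + w1*x1) * h1

theorem envelope_gives_creative (I : Set ℝ) (hIopen : IsOpen I) (hIconn : I.OrdConnected)
    (γ ν : ℝ → Plane) (r : ℝ → ℝ)
    (hγ : ContDiffOn ℝ (⊤ : ℕ∞) γ I) (hν : ContDiffOn ℝ (⊤ : ℕ∞) ν I)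
    (hνunit : ∀ t ∈ I, ‖ν t‖ = 1)
    (hfrontal : ∀ t ∈ I, dotp (deriv γ t) (ν t) = 0)
    (hr : ContDiffOn ℝ (⊤ : ℕ∞) r I) (hrpos : ∀ t ∈ I, 0 < r t)
    (f : ℝ → Plane) (hf : ContDiffOn ℝ (⊤ : ℕ∞) f I)
    (hfcirc : ∀ t ∈ I, ‖f t - γ t‖ = r t)
    (hftang : ∀ t ∈ I, dotp (deriv f t) (f t - γ t) = 0) :
    ContDiffOn ℝ (⊤ : ℕ∞) (fun t => (r t)⁻¹ • (f t - γ t)) I ∧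
    ∀ t ∈ I,
      ‖(r t)⁻¹ • (f t - γ t)‖ = 1 ∧
      deriv r t = -(dotp (deriv γ t) (rotJ (ν t))) *
        dotp ((r t)⁻¹ • (f t - γ t)) (rotJ (ν t)) := by
  have hrne : ∀ t ∈ I, r t ≠ 0 := fun t ht => (hrpos t ht).ne'
  refine ⟨(hr.inv hrne).smul (hf.sub hγ), fun t ht => ?_⟩
  have hrt := hrpos t ht
  have hnorm : ‖(r t)⁻¹ • (f t - γ t)‖ = 1 := by
    rw [norm_smul, hfcirc t ht, Real.norm_eq_abs, abs_inv, abs_of_pos hrt,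
      inv_mul_cancel₀ hrt.ne']
  refine ⟨hnorm, ?_⟩
  have hmem := hIopen.mem_nhds ht
  have hfd : DifferentiableAt ℝ f t := (hf.contDiffAt hmem).differentiableAt (by simp)
  have hγd : DifferentiableAt ℝ γ t := (hγ.contDiffAt hmem).differentiableAt (by simp)
  have hrd : DifferentiableAt ℝ r t := (hr.contDiffAt hmem).differentiableAt (by simp)
  have hg : HasDerivAt (fun s => f s - γ s) (deriv f t - deriv γ t) t :=
    hfd.hasDerivAt.sub hγd.hasDerivAt
  have hin : HasDerivAt (fun s => (inner ℝ (f s - γ s) (f s - γ s) : ℝ))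
      ((inner ℝ (f t - γ t) (deriv f t - deriv γ t) : ℝ) +
        inner ℝ (deriv f t - deriv γ t) (f t - γ t)) t := hg.inner ℝ hg
  have heq : (fun s => (inner ℝ (f s - γ s) (f s - γ s) : ℝ)) =ᶠ[nhds t]
      fun s => (r s) ^ 2 := by
    filter_upwards [hIopen.mem_nhds ht] with s hs
    rw [real_inner_self_eq_norm_sq, hfcirc s hs]
  have hin2 : HasDerivAt (fun s => (r s) ^ 2)
      ((inner ℝ (f t - γ t) (deriv f t - deriv γ t) : ℝ) +
        inner ℝ (deriv f t - deriv γ t) (f t - γ t)) t := hin.congr_of_eventuallyEq heq.symm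
  have hr2 : HasDerivAt (fun s => (r s) ^ 2) (2 * r t * deriv r t) t := by
    exact (hrd.hasDerivAt.pow 2).congr_deriv (by norm_num)
  have hkey : 2 * r t * deriv r t =
      (inner ℝ (f t - γ t) (deriv f t - deriv γ t) : ℝ) +
        inner ℝ (deriv f t - deriv γ t) (f t - γ t) := hr2.unique hin2
  -- simplify the RHS using tangency
  have htang := hftang t ht
  rw [show (dotp (deriv f t) (f t - γ t)) = (inner ℝ (deriv f t) (f t - γ t) : ℝ) from rfl] at htang
  have hkey2 : r t * deriv r t = -(inner ℝ (deriv γ t) (f t - γ t) : ℝ) := by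
    have hc : (inner ℝ (f t - γ t) (deriv f t - deriv γ t) : ℝ) =
        inner ℝ (deriv f t - deriv γ t) (f t - γ t) := real_inner_comm _ _
    rw [← hc, inner_sub_right] at hkey
    have h1 : (inner ℝ (f t - γ t) (deriv f t) : ℝ) = 0 := by
      rw [real_inner_comm]; exact htang
    have h2 : (inner ℝ (deriv γ t) (f t - γ t) : ℝ) = inner ℝ (f t - γ t) (deriv γ t) :=
      real_inner_comm _ _
    rw [h1] at hkey
    rw [h2]
    linarith
  -- coordinate decomposition
  have hfr := hfrontal t ht
  have hν1 : (ν t 0) * (ν t 0) + (ν t 1) * (ν t 1) = 1 := by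
    have : (inner ℝ (ν t) (ν t) : ℝ) = 1 := by
      rw [real_inner_self_eq_norm_sq, hνunit t ht]; norm_num
    simp only [PiLp.inner_apply, Fin.sum_univ_two, RCLike.inner_apply, conj_trivial] at this
    linarith
  have hfr' : (deriv γ t 0) * (ν t 0) + (deriv γ t 1) * (ν t 1) = 0 := by
    simp [dotp, PiLp.inner_apply, Fin.sum_univ_two] at hfr
    linarith [mul_comm (ν t 0) (deriv γ t 0), mul_comm (ν t 1) (deriv γ t 1)]
  have hdecomp : (inner ℝ (deriv γ t) (f t - γ t) : ℝ) =
      (dotp (deriv γ t) (rotJ (ν t))) * (inner ℝ (f t - γ t) (rotJ (ν t)) : ℝ) := by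
    have h := alg_key (ν t 0) (ν t 1) (deriv γ t 0) (deriv γ t 1)
      ((f t - γ t) 0) ((f t - γ t) 1) hν1 hfr'
    simpa [dotp, rotJ, vec2, PiLp.inner_apply, Fin.sum_univ_two, mul_comm] using h
  have hsmul : dotp ((r t)⁻¹ • (f t - γ t)) (rotJ (ν t)) =
      (r t)⁻¹ * (inner ℝ (f t - γ t) (rotJ (ν t)) : ℝ) := by
    exact real_inner_smul_left (f t - γ t) (rotJ (ν t)) ((r t)⁻¹)
  rw [hsmul]
  rw [hdecomp] at hkey2
  field_simp at hkey2 ⊢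
  linarith [hkey2]
end
end

section
/- For γ: ℝ → ℝ² given by γ(t) = (t³, t²) (a frontal with a cusp at t = 0) and constant radius λ(t) = 1, the two maps f±(t) = (t³ ± 2/√(4+9t²), t² ∓ 3t/√(4+9t²)) are envelopes of the circle family C_{(γ,λ)}, and every envelope of the family equals f₊ or f₋. -/
noncomputable section

lemma vec2_apply0 (a b : ℝ) : vec2 a b 0 = a := rfl
lemma vec2_apply1 (a b : ℝ) : vec2 a b 1 = b := rfl
lemma vec2_eta (v : Plane) : vec2 (v 0) (v 1) = v := by
  ext i; fin_cases i <;> rfl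
lemma vec2_sub (a b c d : ℝ) : vec2 a b - vec2 c d = vec2 (a-c) (b-d) := by
  ext i; fin_cases i <;> rfl
lemma dotp_vec2 (a b c d : ℝ) : dotp (vec2 a b) (vec2 c d) = a*c + b*d := by
  simp [dotp, vec2, PiLp.inner_apply, Fin.sum_univ_two, RCLike.inner_apply]
  ring
lemma norm_vec2 (a b : ℝ) : ‖vec2 a b‖ = Real.sqrt (a^2 + b^2) := by
  rw [EuclideanSpace.norm_eq]
  simp [vec2, Fin.sum_univ_two, sq_abs]
lemma vec2_decomp (a b : ℝ) : vec2 a b = a • vec2 1 0 + b • vec2 0 1 := by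
  ext i; fin_cases i <;> simp [vec2]

lemma hasDerivAt_vec2 {A B : ℝ → ℝ} {A' B' : ℝ} {t : ℝ}
    (hA : HasDerivAt A A' t) (hB : HasDerivAt B B' t) :
    HasDerivAt (fun s => vec2 (A s) (B s)) (vec2 A' B') t := by
  have e : (fun s => vec2 (A s) (B s)) = fun s => A s • vec2 1 0 + B s • vec2 0 1 :=
    funext fun s => vec2_decomp _ _
  rw [e, vec2_decomp A' B']
  exact ((hA.smul_const _).add (hB.smul_const _))

lemma contDiff_vec2 {A B : ℝ → ℝ} (hA : ContDiff ℝ (⊤ : ℕ∞) A) (hB : ContDiff ℝ (⊤ : ℕ∞) B) :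
    ContDiff ℝ (⊤ : ℕ∞) (fun s => vec2 (A s) (B s)) := by
  have e : (fun s => vec2 (A s) (B s)) = fun s => A s • vec2 1 0 + B s • vec2 0 1 :=
    funext fun s => vec2_decomp _ _
  rw [e]
  exact (hA.smul contDiff_const).add (hB.smul contDiff_const)

def S (t : ℝ) : ℝ := Real.sqrt (4 + 9 * t ^ 2)

lemma S_base_pos (t : ℝ) : (0:ℝ) < 4 + 9 * t ^ 2 := by positivity
lemma S_pos (t : ℝ) : 0 < S t := Real.sqrt_pos.mpr (S_base_pos t)
lemma S_sq (t : ℝ) : S t ^ 2 = 4 + 9 * t ^ 2 := Real.sq_sqrt (S_base_pos t).le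
lemma contDiff_S : ContDiff ℝ (⊤ : ℕ∞) S :=
  ContDiff.sqrt (by fun_prop) (fun t => (S_base_pos t).ne')
lemma hasDerivAt_S (t : ℝ) : HasDerivAt S (9 * t / S t) t := by
  have h : HasDerivAt (fun t : ℝ => 4 + 9 * t ^ 2) (18 * t) t := by
    have := ((hasDerivAt_pow 2 t).const_mul (9:ℝ)).const_add (4:ℝ)
    simpa using this.congr_deriv (by ring)
  have h2 := h.sqrt (S_base_pos t).ne'
  unfold S
  convert h2 using 1
  rw [show Real.sqrt (4+9*t^2) = S t from rfl]
  have := (S_pos t).ne'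
  field_simp
  ring

lemma env_aux (ε : ℝ) (hε : ε^2 = 1) :
    let f := fun t => vec2 (t ^ 3 + ε * 2 / S t) (t ^ 2 - ε * (3 * t) / S t)
    ContDiff ℝ (⊤ : ℕ∞) f ∧ ∀ t, ‖f t - vec2 (t^3) (t^2)‖ = 1 ∧
      dotp (deriv f t) (f t - vec2 (t^3) (t^2)) = 0 := by
  intro f
  have hSne : ∀ t, S t ≠ 0 := fun t => (S_pos t).ne'
  have hA : ∀ t : ℝ, HasDerivAt (fun s => s ^ 3 + ε * 2 / S s)
      (3 * t ^ 2 + (0 * S t - ε * 2 * (9 * t / S t)) / (S t)^2) t := by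
    intro t
    have h1 : HasDerivAt (fun s : ℝ => s ^ 3) (3 * t ^ 2) t := by
      simpa using hasDerivAt_pow 3 t
    exact h1.add (((hasDerivAt_const t (ε*2)).div (hasDerivAt_S t) (hSne t)))
  have hB : ∀ t : ℝ, HasDerivAt (fun s => s ^ 2 - ε * (3 * s) / S s)
      (2 * t - (ε * 3 * S t - ε * (3 * t) * (9 * t / S t)) / (S t)^2) t := by
    intro t
    have h1 : HasDerivAt (fun s : ℝ => s ^ 2) (2 * t) t := by
      simpa using hasDerivAt_pow 2 t
    have h2 : HasDerivAt (fun s : ℝ => ε * (3 * s)) (ε * 3) t := by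
      simpa using ((hasDerivAt_id t).const_mul (3:ℝ)).const_mul ε
    exact h1.sub (h2.div (hasDerivAt_S t) (hSne t))
  refine ⟨contDiff_vec2 ?_ ?_, fun t => ?_⟩
  · exact (contDiff_id.pow 3).add ((contDiff_const).div contDiff_S hSne)
  · exact (contDiff_id.pow 2).sub ((contDiff_const.mul (contDiff_const.mul contDiff_id)).div contDiff_S hSne)
  constructor
  · show ‖vec2 _ _ - vec2 _ _‖ = 1
    rw [vec2_sub, norm_vec2]
    have h := S_sq t
    have : (t ^ 3 + ε * 2 / S t - t ^ 3) ^ 2 + (t ^ 2 - ε * (3 * t) / S t - t ^ 2) ^ 2 = 1 := by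
      have hne := hSne t
      field_simp
      linear_combination (4 + 9*t^2) * hε - h
    rw [this, Real.sqrt_one]
  · have hd : deriv f t = vec2 _ _ := (hasDerivAt_vec2 (hA t) (hB t)).deriv
    rw [hd]
    show dotp _ (vec2 _ _ - vec2 _ _) = 0
    rw [vec2_sub, dotp_vec2]
    have h := S_sq t
    have hne := hSne t
    have h := S_sq t
    field_simp
    linear_combination (ε^2 * 9 * t) * h

lemma vec2_add (a b c d : ℝ) : vec2 a b + vec2 c d = vec2 (a+c) (b+d) := by
  ext i; fin_cases i <;> rfl

lemma S_zero : S 0 = 2 := by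
  unfold S; norm_num

theorem example_cusp_envelopes' :
    ∀ g : ℝ → Plane,
      IsEnvelope Set.univ (fun t => vec2 (t ^ 3) (t ^ 2)) (fun _ => 1) g →
      (∀ t, g t = vec2 (t ^ 3 + 2 / Real.sqrt (4 + 9 * t ^ 2))
        (t ^ 2 - 3 * t / Real.sqrt (4 + 9 * t ^ 2))) ∨
      (∀ t, g t = vec2 (t ^ 3 - 2 / Real.sqrt (4 + 9 * t ^ 2))
        (t ^ 2 + 3 * t / Real.sqrt (4 + 9 * t ^ 2))) := by
  intro g hg
  obtain ⟨hcd, hpt⟩ := hg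
  rw [contDiffOn_univ] at hcd
  have hgdiff : Differentiable ℝ g := hcd.differentiable (by simp)
  set γ : ℝ → Plane := fun t => vec2 (t^3) (t^2) with hγ
  set u : ℝ → Plane := fun t => g t - γ t with hu
  have hγd : ∀ t, HasDerivAt γ (vec2 (3*t^2) (2*t)) t := fun t =>
    hasDerivAt_vec2 (by simpa using hasDerivAt_pow 3 t) (by simpa using hasDerivAt_pow 2 t)
  have hud : ∀ t, HasDerivAt u (deriv g t - vec2 (3*t^2) (2*t)) t := fun t =>
    ((hgdiff t).hasDerivAt).sub (hγd t)
  have hnorm : ∀ t, ‖u t‖ = 1 := fun t => by simpa using (hpt t trivial).1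
  have horth : ∀ t, (inner ℝ (deriv g t) (u t) : ℝ) = 0 := fun t => (hpt t trivial).2
  have hinner1 : ∀ t, (inner ℝ (u t) (u t) : ℝ) = 1 := fun t => by
    rw [real_inner_self_eq_norm_mul_norm, hnorm t, one_mul]
  have hkey : ∀ t, (inner ℝ (vec2 (3*t^2) (2*t)) (u t) : ℝ) = 0 := by
    intro t
    have hconst : HasDerivAt (fun t => (inner ℝ (u t) (u t) : ℝ)) 0 t := by
      have e : (fun t => (inner ℝ (u t) (u t) : ℝ)) = fun _ => 1 := funext hinner1
      rw [e]; exact hasDerivAt_const t 1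
    have hdd := (hud t).inner ℝ (hud t)
    have h0 := hconst.unique hdd
    rw [real_inner_comm (u t)] at h0
    have huu2 : (inner ℝ (u t) (deriv g t - vec2 (3*t^2) (2*t)) : ℝ) = 0 := by linarith
    rw [inner_sub_right] at huu2
    have h1 : (inner ℝ (u t) (deriv g t) : ℝ) = 0 := by
      rw [real_inner_comm]; exact horth t
    rw [real_inner_comm]
    linarith
  set h : ℝ → ℝ := fun t => u t 0 with hh
  set k : ℝ → ℝ := fun t => u t 1 with hk
  have hcoord : ∀ t, 3*t^2 * h t + 2*t * k t = 0 := by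
    intro t
    have := hkey t
    rw [show (inner ℝ (vec2 (3*t^2) (2*t)) (u t) : ℝ) = dotp (vec2 (3*t^2) (2*t)) (u t) from rfl,
      ← vec2_eta (u t), dotp_vec2] at this
    linarith
  have hsq : ∀ t, h t ^ 2 + k t ^ 2 = 1 := by
    intro t
    have := hnorm t
    rw [← vec2_eta (u t), norm_vec2] at this
    exact Real.sqrt_eq_one.mp this
  have hucont : Continuous u := (hcd.continuous).sub
    ((contDiff_vec2 (contDiff_id.pow 3) (contDiff_id.pow 2)).continuous)
  have hhcont : Continuous h := (EuclideanSpace.proj (0 : Fin 2)).continuous.comp hucont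
  have hkcont : Continuous k := (EuclideanSpace.proj (1 : Fin 2)).continuous.comp hucont
  -- for t ≠ 0, h determines k and |h| = 2 / S t
  have hkval : ∀ t ≠ 0, k t = -(3*t) * h t / 2 := by
    intro t ht
    have := hcoord t
    have h3 : 3*t * h t + 2 * k t = 0 := by
      rcases mul_eq_zero.mp (show t * (3*t * h t + 2 * k t) = 0 by linear_combination this) with h'|h'
      · exact absurd h' ht
      · exact h'
    linarith
  have habs : ∀ t, |h t| = 2 / S t := by
    have e : (fun t => |h t|) = fun t => 2 / S t := by
      apply Continuous.ext_on (dense_compl_singleton (0:ℝ)) (by fun_prop)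
        (by exact continuous_const.div contDiff_S.continuous fun t => (S_pos t).ne')
      intro t ht
      have ht : t ≠ 0 := ht
      have hk' := hkval t ht
      have hs := hsq t
      have hS2 := S_sq t
      have hSpos := S_pos t
      have hsq2 : h t ^ 2 = (2 / S t)^2 := by
        rw [hk'] at hs
        field_simp at hs ⊢
        nlinarith [hs, hS2]
      calc |h t| = Real.sqrt (h t ^ 2) := (Real.sqrt_sq_eq_abs _).symm
        _ = Real.sqrt ((2 / S t)^2) := by rw [hsq2]
        _ = 2 / S t := Real.sqrt_sq (by positivity)
    exact fun t => congrFun e t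
  have hne : ∀ t, h t ≠ 0 := by
    intro t h0
    have := habs t
    rw [h0, abs_zero] at this
    have := (S_pos t)
    have : (2:ℝ) / S t > 0 := by positivity
    linarith [habs t, (abs_zero (α := ℝ)).le]
  have hsign : (∀ t, 0 < h t) ∨ (∀ t, h t < 0) := by
    rcases lt_or_gt_of_ne (hne 0) with hneg | hpos
    · right
      intro t
      by_contra hcon
      push_neg at hcon
      have h0lt : h 0 < 0 := hneg
      have : (0:ℝ) ∈ Set.uIcc (h 0) (h t) := Set.mem_uIcc.mpr (Or.inl ⟨h0lt.le, hcon⟩)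
      obtain ⟨c, _, hc⟩ := intermediate_value_uIcc (hhcont.continuousOn) this
      exact hne c hc
    · left
      intro t
      by_contra hcon
      push_neg at hcon
      have : (0:ℝ) ∈ Set.uIcc (h 0) (h t) := Set.mem_uIcc.mpr (Or.inr ⟨hcon, hpos.le⟩)
      obtain ⟨c, _, hc⟩ := intermediate_value_uIcc (hhcont.continuousOn) this
      exact hne c hc
  have hgu : ∀ t, g t = vec2 (t^3 + h t) (t^2 + k t) := by
    intro t
    have : g t = γ t + u t := by simp [hu]
    rw [this, hγ, ← vec2_eta (u t), vec2_add]
  have hkzero : k 0 = 0 := by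
    have := hsq 0
    have h0 : h 0 ^ 2 = 1 := by
      have := habs 0
      rw [S_zero] at this
      norm_num at this
      nlinarith [abs_nonneg (h 0), sq_abs (h 0)]
    nlinarith [sq_nonneg (k 0)]
  rcases hsign with hs1 | hs1
  · left
    intro t
    have hht : h t = 2 / S t := by
      rw [← habs t]; exact (abs_of_pos (hs1 t)).symm
    have hkt : k t = -(3*t) / S t := by
      rcases eq_or_ne t 0 with rfl | ht
      · rw [hkzero]; norm_num
      · rw [hkval t ht, hht]
        field_simp
    rw [hgu t, hht, hkt]
    show _ = vec2 _ _
    rw [show Real.sqrt (4 + 9 * t ^ 2) = S t from rfl]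
    congr 1 <;> ring
  · right
    intro t
    have hht : h t = -(2 / S t) := by
      have := habs t
      rw [abs_of_neg (hs1 t)] at this
      linarith
    have hkt : k t = (3*t) / S t := by
      rcases eq_or_ne t 0 with rfl | ht
      · rw [hkzero]; norm_num
      · rw [hkval t ht, hht]
        field_simp
    rw [hgu t, hht, hkt]
    show _ = vec2 _ _
    rw [show Real.sqrt (4 + 9 * t ^ 2) = S t from rfl]
    congr 1 <;> ring

theorem example_cusp_envelopes :
    IsEnvelope Set.univ (fun t => vec2 (t ^ 3) (t ^ 2)) (fun _ => 1)
      (fun t => vec2 (t ^ 3 + 2 / Real.sqrt (4 + 9 * t ^ 2))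
        (t ^ 2 - 3 * t / Real.sqrt (4 + 9 * t ^ 2))) ∧
    IsEnvelope Set.univ (fun t => vec2 (t ^ 3) (t ^ 2)) (fun _ => 1)
      (fun t => vec2 (t ^ 3 - 2 / Real.sqrt (4 + 9 * t ^ 2))
        (t ^ 2 + 3 * t / Real.sqrt (4 + 9 * t ^ 2))) ∧
    ∀ g : ℝ → Plane,
      IsEnvelope Set.univ (fun t => vec2 (t ^ 3) (t ^ 2)) (fun _ => 1) g →
      (∀ t, g t = vec2 (t ^ 3 + 2 / Real.sqrt (4 + 9 * t ^ 2))
        (t ^ 2 - 3 * t / Real.sqrt (4 + 9 * t ^ 2))) ∨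
      (∀ t, g t = vec2 (t ^ 3 - 2 / Real.sqrt (4 + 9 * t ^ 2))
        (t ^ 2 + 3 * t / Real.sqrt (4 + 9 * t ^ 2))) := by
  have key : ∀ ε : ℝ, ε ^ 2 = 1 → IsEnvelope Set.univ (fun t => vec2 (t ^ 3) (t ^ 2)) (fun _ => 1)
      (fun t => vec2 (t ^ 3 + ε * 2 / S t) (t ^ 2 - ε * (3 * t) / S t)) := by
    intro ε hε
    obtain ⟨h1, h2⟩ := env_aux ε hε
    exact ⟨h1.contDiffOn, fun t _ => h2 t⟩
  have e1 : (fun t : ℝ => vec2 (t ^ 3 + 2 / Real.sqrt (4 + 9 * t ^ 2))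
        (t ^ 2 - 3 * t / Real.sqrt (4 + 9 * t ^ 2)))
      = fun t => vec2 (t ^ 3 + (1:ℝ) * 2 / S t) (t ^ 2 - (1:ℝ) * (3 * t) / S t) := by
    funext t; unfold S; congr 1 <;> ring
  have e2 : (fun t : ℝ => vec2 (t ^ 3 - 2 / Real.sqrt (4 + 9 * t ^ 2))
        (t ^ 2 + 3 * t / Real.sqrt (4 + 9 * t ^ 2)))
      = fun t => vec2 (t ^ 3 + (-1:ℝ) * 2 / S t) (t ^ 2 - (-1:ℝ) * (3 * t) / S t) := by
    funext t; unfold S; congr 1 <;> ring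
  exact ⟨by rw [e1]; exact key 1 (by norm_num), by rw [e2]; exact key (-1) (by norm_num),
    example_cusp_envelopes'⟩
end
end

section
/- Let f be an envelope of the circle family C_{(γ,λ)} with creator ν̃ (so f = γ + λν̃). Then f is also an envelope of the straight line family {L_{(f(t), ν̃(t))}}_{t∈I}, i.e. f'(t)·ν̃(t) = 0 for all t ∈ I, where L_{(P,v)} = {q ∈ ℝ² : (q-P)·v = 0}. -/
noncomputable section

theorem envelope_of_line_family (I : Set ℝ) (hIopen : IsOpen I) (hIconn : I.OrdConnected)
    (γ ν : ℝ → Plane) (r : ℝ → ℝ)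
    (hγ : ContDiffOn ℝ (⊤ : ℕ∞) γ I) (hν : ContDiffOn ℝ (⊤ : ℕ∞) ν I)
    (hνunit : ∀ t ∈ I, ‖ν t‖ = 1)
    (hfrontal : ∀ t ∈ I, dotp (deriv γ t) (ν t) = 0)
    (hr : ContDiffOn ℝ (⊤ : ℕ∞) r I) (hrpos : ∀ t ∈ I, 0 < r t)
    (ντ : ℝ → Plane) (hcrs : ContDiffOn ℝ (⊤ : ℕ∞) ντ I) (hcru : ∀ t ∈ I, ‖ντ t‖ = 1)
    (hcr : ∀ t ∈ I,
      deriv r t = -(dotp (deriv γ t) (rotJ (ν t))) * dotp (ντ t) (rotJ (ν t))) :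
    ∀ t ∈ I, dotp (deriv (fun s => γ s + r s • ντ s) t) (ντ t) = 0 := by
  intro t ht
  have hmem := hIopen.mem_nhds ht
  have hdγ : DifferentiableAt ℝ γ t := ((hγ.contDiffAt hmem).differentiableAt (by simp))
  have hdr : DifferentiableAt ℝ r t := ((hr.contDiffAt hmem).differentiableAt (by simp))
  have hdν : DifferentiableAt ℝ ντ t := ((hcrs.contDiffAt hmem).differentiableAt (by simp))
  have hf : HasDerivAt (fun s => γ s + r s • ντ s)
      (deriv γ t + (r t • deriv ντ t + deriv r t • ντ t)) t :=
    hdγ.hasDerivAt.add (hdr.hasDerivAt.smul hdν.hasDerivAt)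
  -- derivative of the constant ⟪ντ, ντ⟫ = 1
  have hinner : HasDerivAt (fun s => (inner ℝ (ντ s) (ντ s) : ℝ))
      (inner ℝ (ντ t) (deriv ντ t) + inner ℝ (deriv ντ t) (ντ t)) t :=
    hdν.hasDerivAt.inner ℝ hdν.hasDerivAt
  have hconst : (fun s => (inner ℝ (ντ s) (ντ s) : ℝ)) =ᶠ[nhds t] fun _ => (1 : ℝ) := by
    filter_upwards [hmem] with s hs
    have := hcru s hs
    rw [real_inner_self_eq_norm_sq, this]; norm_num
  have hzero : (inner ℝ (ντ t) (deriv ντ t) + inner ℝ (deriv ντ t) (ντ t) : ℝ) = 0 := by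
    have h1 : HasDerivAt (fun s => (inner ℝ (ντ s) (ντ s) : ℝ)) 0 t :=
      (hasDerivAt_const t (1 : ℝ)).congr_of_eventuallyEq hconst
    exact hinner.unique h1
  have hperp : dotp (deriv ντ t) (ντ t) = 0 := by
    rw [real_inner_comm (ντ t) (deriv ντ t)] at hzero
    rw [dotp, real_inner_comm]; linarith
  rw [hf.deriv]
  have hexp : dotp (deriv γ t + (r t • deriv ντ t + deriv r t • ντ t)) (ντ t)
      = dotp (deriv γ t) (ντ t) + deriv r t * dotp (ντ t) (ντ t)
        + r t * dotp (deriv ντ t) (ντ t) := by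
    simp [dotp, inner_add_left, real_inner_smul_left]; ring
  rw [hexp]
  have hunit : dotp (ντ t) (ντ t) = 1 := by
    rw [dotp, real_inner_self_eq_norm_sq, hcru t ht]; norm_num
  rw [hunit, hperp]
  -- coordinate algebra
  have hdot : ∀ x y : Plane, dotp x y = x 0 * y 0 + x 1 * y 1 := by
    intro x y
    simp [dotp, PiLp.inner_apply, Fin.sum_univ_two, mul_comm]
  have hJ0 : ∀ v : Plane, rotJ v 0 = -(v 1) := fun v => rfl
  have hJ1 : ∀ v : Plane, rotJ v 1 = v 0 := fun v => rfl
  have hn : ν t 0 ^ 2 + ν t 1 ^ 2 = 1 := by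
    have := hνunit t ht
    have h2 : dotp (ν t) (ν t) = 1 := by
      rw [dotp, real_inner_self_eq_norm_sq, this]; norm_num
    rw [hdot] at h2; nlinarith [h2]
  have hfr := hfrontal t ht
  rw [hdot] at hfr
  have hcr' := hcr t ht
  rw [hdot, hdot] at hcr'
  simp only [hJ0, hJ1] at hcr'
  rw [hdot]
  set a0 := deriv γ t 0; set a1 := deriv γ t 1
  set n0 := ν t 0; set n1 := ν t 1
  set w0 := ντ t 0; set w1 := ντ t 1
  rw [hcr']
  linear_combination (w0 * n0 + w1 * n1) * hfr - (a0 * w0 + a1 * w1) * hn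
end
end
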